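/- Let I be a finite category with N objects and adjacency matrix A, having series Euler characteristic. With deg det(I - A·z) = N-r, factorization det(I - A·z) = d_{N-r}·∏_{k=1}^n (z-θ_k)^{e_k} over ℂ, and partial fraction decomposition sum(adj(I - A·z)·A)/det(I - A·z) = (1/d_{N-r})·∑_k ∑_{j=1}^{e_k} A_{k,j}/(z-θ_k)^j, the identity (1/d_{N-r})·∑_{k=1}^n (-θ_k·A_{k,1} - A_{k,2}) = χ_Σ(I) holds, where A_{k,2} = 0 if e_k = 1. -/

import Mathlib

open Polynomial Matrix

/-- The sum of all the entries of a matrix. -/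
def sumEntries {R : Type*} [AddCommMonoid R] {N : ℕ} (M : Matrix (Fin N) (Fin N) R) : R :=
  ∑ i, ∑ j, M i j

/-- `det(I - A·z)` over `ℂ`. -/
noncomputable def detIsubAz {N : ℕ} (A : Matrix (Fin N) (Fin N) ℂ) : ℂ[X] :=
  ((1 : Matrix (Fin N) (Fin N) ℂ[X]) - (X : ℂ[X]) • A.map C).det

/-- `det(A - I·z)` over `ℂ`. -/
noncomputable def detAsubIz {N : ℕ} (A : Matrix (Fin N) (Fin N) ℂ) : ℂ[X] :=
  (A.map C - (X : ℂ[X]) • (1 : Matrix (Fin N) (Fin N) ℂ[X])).det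

/-- `sum(adj(A - I·z))` over `ℂ`. -/
noncomputable def sumAdjAsubIz {N : ℕ} (A : Matrix (Fin N) (Fin N) ℂ) : ℂ[X] :=
  sumEntries (adjugate (A.map C - (X : ℂ[X]) • (1 : Matrix (Fin N) (Fin N) ℂ[X])))

/-- `sum(adj(I - A·z)·A)` over `ℂ`. -/
noncomputable def sumAdjIsubAzA {N : ℕ} (A : Matrix (Fin N) (Fin N) ℂ) : ℂ[X] :=
  sumEntries (adjugate ((1 : Matrix (Fin N) (Fin N) ℂ[X]) - (X : ℂ[X]) • A.map C) * A.map C)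

/-- The series Euler characteristic: the value of `sum(adj(A - E·z))/det(A - E·z)` at `z = 0`. -/
noncomputable def seriesEuler {N : ℕ} (A : Matrix (Fin N) (Fin N) ℂ) : ℂ :=
  RatFunc.eval (RingHom.id ℂ) 0 (RatFunc.mk (sumAdjAsubIz A) (detAsubIz A))

/-!
Write `g = det(I - A·z)` and `t = sum(adj(I - A·z))`. Since `A - z·I = -z·(I - z⁻¹·A)`,
`det(A - z·I)` and `sum(adj(A - z·I))` are, up to the common sign `(-1)^N`, the reflections in
degree `N` of `g` and of `-z·t`. So `χ_Σ` is the value at `z = ∞` of `-z·t/g`: the existence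
hypothesis says `deg(z·t) ≤ deg g`, and then `χ_Σ` is minus the ratio of the coefficients of `z·t`
and `g` in degree `deg g`. From `adj(I - A·z)·(I - A·z) = g·I` we get
`t = N·g + z·sum(adj(I - A·z)·A)`, and the partial fraction decomposition expresses the last sum
through the `A_{k,j}` and the polynomials `g/(z - θ_k)^j`. Comparing coefficients in degrees
`deg g + 1` and `deg g` gives `N·d + ∑ A_{k,1} = 0` and then the claimed value.
-/

namespace SeriesEuler

section Semiring

variable {R : Type*} [Semiring R]

theorem reflect_eq_X_pow_mul_reflect {p : R[X]} {E N : ℕ} (hp : p.natDegree ≤ E) (hEN : E ≤ N) :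
    reflect N p = X ^ (N - E) * reflect E p := by
  have := reflect_mul (1 : R[X]) p (F := N - E) (by simp) hp
  rwa [Nat.sub_add_cancel hEN, one_mul, reflect_one] at this

theorem coeff_X_mul_natDegree (p : R[X]) : (X * p).coeff p.natDegree = p.nextCoeff := by
  rcases Nat.eq_zero_or_pos p.natDegree with h | h
  · simp [h, nextCoeff]
  · rw [nextCoeff_of_natDegree_pos h, ← Nat.sub_add_cancel h, coeff_X_mul, Nat.add_sub_cancel]

theorem coeff_X_mul_eq_zero_of_natDegree_add_one_lt {p : R[X]} {i : ℕ}
    (h : p.natDegree + 1 < i) : (X * p).coeff i = 0 := by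
  cases i with
  | zero => omega
  | succ i =>
    rw [coeff_X_mul]
    exact coeff_eq_zero_of_natDegree_lt (by omega)

end Semiring

section Reflect

variable {K : Type*} [Field K]

theorem eq_reflect_of_eval_eq [Infinite K] {p q : K[X]} {M : ℕ} (hq : q.natDegree ≤ M)
    (h : ∀ z ≠ 0, p.eval z = z ^ M * q.eval z⁻¹) : p = reflect M q := by
  refine eq_of_infinite_eval_eq _ _ <|
    (Set.finite_singleton (0 : K)).infinite_compl.mono fun z (hz : z ≠ 0) => ?_
  let := invertibleOfNonzero (inv_ne_zero hz)
  have := eval₂_reflect_mul_pow (RingHom.id K) z⁻¹ M q hq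
  rw [invOf_eq_inv, inv_inv, eval₂_id, eval₂_id] at this
  change _ = eval z (reflect M q)
  rw [h z hz, ← this, mul_left_comm, ← mul_pow, mul_inv_cancel₀ hz, one_pow, mul_one]

theorem natTrailingDegree_reflect {q : K[X]} {N : ℕ} (hq : q ≠ 0) (hqN : q.natDegree ≤ N) :
    (reflect N q).natTrailingDegree = N - q.natDegree := by
  rw [reflect_eq_X_pow_mul_reflect le_rfl hqN, mul_comm, ← reverse,
    natTrailingDegree_mul_X_pow (reverse_eq_zero.not.mpr hq), natTrailingDegree_reverse,
    zero_add]

theorem natDegree_le_of_natTrailingDegree_reflect_le {p q : K[X]} {N : ℕ} (hq : q ≠ 0)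
    (hqN : q.natDegree ≤ N) (hpN : p.natDegree ≤ N)
    (h : (reflect N q).natTrailingDegree ≤ (reflect N p).natTrailingDegree) :
    p.natDegree ≤ q.natDegree := by
  rcases eq_or_ne p 0 with rfl | hp
  · simp
  rw [natTrailingDegree_reflect hq hqN, natTrailingDegree_reflect hp hpN] at h
  omega

theorem _root_.RatFunc.eval_div_algebraMap {p q : K[X]} {a : K} (hq : q.eval a ≠ 0) :
    RatFunc.eval (RingHom.id K) a (algebraMap K[X] (RatFunc K) p / algebraMap _ _ q)
      = p.eval a / q.eval a := by
  have hq0 : q ≠ 0 := fun h => hq (by simp [h])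
  have hdenom : (RatFunc.denom (algebraMap K[X] (RatFunc K) p / algebraMap _ _ q)).eval a ≠ 0 :=
    fun h => hq (eval_eq_zero_of_dvd_of_eval_eq_zero (RatFunc.denom_div_dvd p q) h)
  have := RatFunc.eval_mul (RingHom.id K) a (y := algebraMap _ _ q) hdenom (by simp)
  rw [div_mul_cancel₀ _ (RatFunc.algebraMap_ne_zero hq0)] at this
  simp only [RatFunc.eval_algebraMap, Algebra.algebraMap_self, RingHom.id_apply, eval₂_id] at this
  rw [this, mul_div_cancel_right₀ _ hq]

theorem eval_zero_mk_reflect {p q : K[X]} {N : ℕ} (hq : q ≠ 0) (hpq : p.natDegree ≤ q.natDegree)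
    (hqN : q.natDegree ≤ N) :
    RatFunc.eval (RingHom.id K) 0 (RatFunc.mk (reflect N p) (reflect N q))
      = p.coeff q.natDegree / q.leadingCoeff := by
  rw [reflect_eq_X_pow_mul_reflect hpq hqN, reflect_eq_X_pow_mul_reflect le_rfl hqN,
    RatFunc.mk_eq_div, map_mul, map_mul,
    mul_div_mul_left _ _ (RatFunc.algebraMap_ne_zero (pow_ne_zero _ X_ne_zero))]
  rw [RatFunc.eval_div_algebraMap] <;>
    simp only [← coeff_zero_eq_eval_zero, coeff_reflect, revAt_zero, coeff_natDegree]
  exact leadingCoeff_ne_zero.mpr hq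

end Reflect

section SumEntries

variable {R : Type*} [CommRing R] {N : ℕ}

theorem sumEntries_smul (c : R) (M : Matrix (Fin N) (Fin N) R) :
    sumEntries (c • M) = c * sumEntries M := by
  simp [sumEntries, Finset.mul_sum]

theorem eval_sumEntries_adjugate (M : Matrix (Fin N) (Fin N) R[X]) (z : R) :
    (sumEntries (adjugate M)).eval z = sumEntries (adjugate (M.map (eval z))) := by
  simp only [sumEntries, eval_finsetSum]
  rw [← coe_evalRingHom, ← RingHom.mapMatrix_apply, ← RingHom.map_adjugate]
  rfl

end SumEntries

section Matrix

variable {N : ℕ} (A : Matrix (Fin N) (Fin N) ℂ)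

noncomputable def sumAdjIsubAz : ℂ[X] :=
  sumEntries (adjugate ((1 : Matrix (Fin N) (Fin N) ℂ[X]) - (X : ℂ[X]) • A.map C))

theorem detIsubAz_eq_reverse_charpoly : detIsubAz A = A.charpoly.reverse :=
  (reverse_charpoly A).symm

theorem detIsubAz_ne_zero : detIsubAz A ≠ 0 := by
  rw [detIsubAz_eq_reverse_charpoly, Ne, reverse_eq_zero]
  exact (charpoly_monic A).ne_zero

theorem natDegree_detIsubAz_le : (detIsubAz A).natDegree ≤ N := by
  simpa [detIsubAz_eq_reverse_charpoly] using reverse_natDegree_le A.charpoly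

theorem detAsubIz_eq_reflect : detAsubIz A = reflect N (C ((-1) ^ N) * detIsubAz A) := by
  have : A.map C - (X : ℂ[X]) • 1 = -charmatrix A := by
    ext i j
    rcases eq_or_ne i j with rfl | h
    · simp [charmatrix_apply_eq]
    · simp [h]
  rw [detAsubIz, this, det_neg, Fintype.card_fin, reflect_C_mul, detIsubAz_eq_reverse_charpoly,
    reverse, charpoly_natDegree_eq_dim, Fintype.card_fin, reflect_reflect]
  simp [charpoly]

theorem sumAdjIsubAz_eq :
    sumAdjIsubAz A = (N : ℂ[X]) * detIsubAz A + X * sumAdjIsubAzA A := by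
  set B : Matrix (Fin N) (Fin N) ℂ[X] := 1 - (X : ℂ[X]) • A.map C
  have hadj : adjugate B = B.det • 1 + (X : ℂ[X]) • (adjugate B * A.map C) := by
    rw [← adjugate_mul B, Matrix.mul_sub, Matrix.mul_one, Matrix.mul_smul, sub_add_cancel]
  rw [sumAdjIsubAz, hadj]
  simp [sumEntries, sumAdjIsubAzA, detIsubAz, B, Finset.sum_add_distrib, Finset.mul_sum,
    Matrix.one_apply, mul_comm]

theorem natDegree_X_mul_sumAdjIsubAz_le : (X * sumAdjIsubAz A).natDegree ≤ N := by
  cases N with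
  | zero => simp [sumAdjIsubAz, sumEntries]
  | succ m =>
    refine natDegree_mul_le.trans ?_
    refine (add_le_add natDegree_X_le ?_).trans_eq (add_comm 1 m)
    unfold sumAdjIsubAz sumEntries
    refine natDegree_sum_le_of_forall_le _ _ fun i _ =>
      natDegree_sum_le_of_forall_le _ _ fun j _ => ?_
    -- each entry of the adjugate is, up to sign, a minor of order `m` of a matrix affine in `X`
    have hsub : ((1 : Matrix (Fin (m + 1)) (Fin (m + 1)) ℂ[X]) - (X : ℂ[X]) • A.map C).submatrix
          j.succAbove i.succAbove
        = (X : ℂ[X]) • (-A.submatrix j.succAbove i.succAbove).map C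
          + (submatrix 1 j.succAbove i.succAbove : Matrix (Fin m) (Fin m) ℂ).map C := by
      ext k l
      simp [Matrix.one_apply, sub_eq_neg_add]
    rw [adjugate_fin_succ_eq_det_submatrix, hsub]
    refine natDegree_mul_le.trans ?_
    simpa using natDegree_det_X_add_C_le (-A.submatrix j.succAbove i.succAbove)
      (submatrix 1 j.succAbove i.succAbove)

theorem sumAdjAsubIz_eq_reflect :
    sumAdjAsubIz A = reflect N (C ((-1) ^ (N + 1)) * (X * sumAdjIsubAz A)) := by
  refine eq_reflect_of_eval_eq ((natDegree_C_mul_le _ _).trans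
    (natDegree_X_mul_sumAdjIsubAz_le A)) fun z hz => ?_
  have hA : (A.map C - (X : ℂ[X]) • 1).map (eval z) = (-z) • (1 - z⁻¹ • A) := by
    ext i j
    rcases eq_or_ne i j with rfl | h
    · simp
      field_simp
      ring
    · simp [h]
      field_simp
  have hI : ((1 : Matrix (Fin N) (Fin N) ℂ[X]) - (X : ℂ[X]) • A.map C).map (eval z⁻¹)
      = 1 - z⁻¹ • A := by
    ext i j
    rcases eq_or_ne i j with rfl | h
    · simp
      ring
    · simp [h]
      ring
  rw [sumAdjAsubIz, eval_sumEntries_adjugate, hA, adjugate_smul, sumEntries_smul, eval_mul,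
    eval_mul, sumAdjIsubAz, eval_sumEntries_adjugate, hI, eval_C, eval_X, Fintype.card_fin]
  cases N with
  | zero => simp [sumEntries]
  | succ m =>
    rw [Nat.add_sub_cancel]
    field_simp
    ring

end Matrix

section PartialFractions

variable {K : Type*} [Field K] {n : ℕ} (θ : Fin n → K) (e : Fin n → ℕ)

theorem nextCoeff_prod_X_sub_C_pow (s : Finset (Fin n)) :
    (∏ l ∈ s, (X - C (θ l)) ^ e l).nextCoeff = -∑ l ∈ s, (e l : K) * θ l := by
  rw [Monic.nextCoeff_prod _ _ fun l _ => (monic_X_sub_C (θ l)).pow _, ← Finset.sum_neg_distrib]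
  refine Finset.sum_congr rfl fun l _ => ?_
  rw [Monic.nextCoeff_pow (monic_X_sub_C _), nextCoeff_X_sub_C, nsmul_eq_mul, mul_neg]

theorem natDegree_prod_X_sub_C_pow :
    (∏ l, (X - C (θ l)) ^ e l).natDegree = ∑ l, e l := by
  simp [natDegree_prod _ _ fun l _ => pow_ne_zero _ (X_sub_C_ne_zero (θ l))]

/-- `∏ l, (X - θ l) ^ e l` divided by `(X - θ k) ^ j`, for `j ≤ e k`. -/
noncomputable def cofactor (k : Fin n) (j : ℕ) : K[X] :=
  (X - C (θ k)) ^ (e k - j) * ∏ l ∈ Finset.univ.erase k, (X - C (θ l)) ^ e l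

variable {θ e}

theorem cofactor_monic (k : Fin n) (j : ℕ) : (cofactor θ e k j).Monic :=
  ((monic_X_sub_C _).pow _).mul (monic_prod_of_monic _ _ fun _ _ => (monic_X_sub_C _).pow _)

theorem prod_eq_pow_mul_cofactor {k : Fin n} {j : ℕ} (hj : j ≤ e k) :
    ∏ l, (X - C (θ l)) ^ e l = (X - C (θ k)) ^ j * cofactor θ e k j := by
  rw [cofactor, ← mul_assoc, ← pow_add, Nat.add_sub_cancel' hj]
  exact (Finset.mul_prod_erase _ _ (Finset.mem_univ k)).symm

theorem natDegree_cofactor {k : Fin n} {j : ℕ} (hj : j ≤ e k) :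
    (cofactor θ e k j).natDegree = (∑ l, e l) - j := by
  have h := congrArg natDegree (prod_eq_pow_mul_cofactor (θ := θ) hj)
  rw [((monic_X_sub_C _).pow _).natDegree_mul (cofactor_monic k j), natDegree_pow,
    natDegree_X_sub_C, mul_one, natDegree_prod_X_sub_C_pow] at h
  omega

theorem nextCoeff_cofactor_one {k : Fin n} (hk : 1 ≤ e k) :
    (cofactor θ e k 1).nextCoeff = θ k - ∑ l, (e l : K) * θ l := by
  rw [cofactor, Monic.nextCoeff_mul ((monic_X_sub_C _).pow _)
      (monic_prod_of_monic _ _ fun _ _ => (monic_X_sub_C _).pow _),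
    Monic.nextCoeff_pow (monic_X_sub_C _), nextCoeff_X_sub_C, nextCoeff_prod_X_sub_C_pow,
    Finset.sum_erase_eq_sub (Finset.mem_univ k), nsmul_eq_mul, Nat.cast_sub hk]
  ring

theorem eq_sum_cofactor_of_div_eq {S : K[X]} {d : K} (hd : d ≠ 0) {a : Fin n → ℕ → K}
    (h : algebraMap K[X] (RatFunc K) S
          / algebraMap K[X] (RatFunc K) (C d * ∏ k, (X - C (θ k)) ^ e k)
        = RatFunc.C d⁻¹ * ∑ k, ∑ j ∈ Finset.Icc 1 (e k),
            RatFunc.C (a k j) / (RatFunc.X - RatFunc.C (θ k)) ^ j) :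
    S = ∑ k, ∑ j ∈ Finset.Icc 1 (e k), C (a k j) * cofactor θ e k j := by
  set W := ∏ k, (X - C (θ k)) ^ e k
  set F := ∑ k, ∑ j ∈ Finset.Icc 1 (e k), RatFunc.C (a k j) / (RatFunc.X - RatFunc.C (θ k)) ^ j
  have hW : algebraMap K[X] (RatFunc K) W ≠ 0 := RatFunc.algebraMap_ne_zero <|
    Finset.prod_ne_zero_iff.mpr fun k _ => pow_ne_zero _ (X_sub_C_ne_zero _)
  have hX (k : Fin n) : RatFunc.X - RatFunc.C (θ k) ≠ 0 := by
    rw [← RatFunc.algebraMap_X, ← RatFunc.algebraMap_C, ← map_sub]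
    exact RatFunc.algebraMap_ne_zero (X_sub_C_ne_zero _)
  have hCd : RatFunc.C d⁻¹ * RatFunc.C d = (1 : RatFunc K) := by
    rw [← map_mul, inv_mul_cancel₀ hd, map_one]
  have hS : algebraMap K[X] (RatFunc K) S = F * algebraMap K[X] (RatFunc K) W := by
    rw [div_eq_iff (by simpa [hd] using hW), map_mul, RatFunc.algebraMap_C] at h
    rw [h]
    linear_combination F * algebraMap K[X] (RatFunc K) W * hCd
  apply RatFunc.algebraMap_injective K
  rw [hS, map_sum, Finset.sum_mul]
  refine Finset.sum_congr rfl fun k _ => ?_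
  rw [Finset.sum_mul, map_sum]
  refine Finset.sum_congr rfl fun j hj => ?_
  rw [show W = _ from prod_eq_pow_mul_cofactor (Finset.mem_Icc.mp hj).2, map_mul, map_mul,
    map_pow, map_sub, RatFunc.algebraMap_X, RatFunc.algebraMap_C, RatFunc.algebraMap_C]
  field_simp [hX k]

theorem coeff_X_mul_sum_cofactor (he : ∀ k, 1 ≤ e k) (a : Fin n → ℕ → K) :
    (X * ∑ k, ∑ j ∈ Finset.Icc 1 (e k), C (a k j) * cofactor θ e k j).coeff (∑ l, e l)
      = ∑ k, a k 1 := by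
  simp only [Finset.mul_sum, finsetSum_coeff, mul_left_comm X (C _), coeff_C_mul]
  refine Finset.sum_congr rfl fun k _ => ?_
  have hk : e k ≤ ∑ l, e l := Finset.single_le_sum (fun _ _ => Nat.zero_le _) (Finset.mem_univ k)
  have hk1 := he k
  rw [Finset.sum_eq_single_of_mem 1 (Finset.mem_Icc.mpr ⟨le_rfl, hk1⟩)]
  · rw [show ∑ l, e l = (cofactor θ e k 1).natDegree + 1 by rw [natDegree_cofactor hk1]; omega,
      coeff_X_mul, (cofactor_monic k 1).coeff_natDegree, mul_one]
  · intro j hj hj1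
    obtain ⟨hj_pos, hjk⟩ := Finset.mem_Icc.mp hj
    rw [coeff_X_mul_eq_zero_of_natDegree_add_one_lt, mul_zero]
    rw [natDegree_cofactor hjk]
    omega

theorem coeff_X_mul_X_mul_sum_cofactor (he : ∀ k, 1 ≤ e k) {a : Fin n → ℕ → K}
    (ha2 : ∀ k, e k = 1 → a k 2 = 0) :
    (X * (X * ∑ k, ∑ j ∈ Finset.Icc 1 (e k), C (a k j) * cofactor θ e k j)).coeff (∑ l, e l)
      = ∑ k, (a k 1 * (θ k - ∑ l, (e l : K) * θ l) + a k 2) := by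
  simp only [Finset.mul_sum, finsetSum_coeff, mul_left_comm X (C _), coeff_C_mul]
  refine Finset.sum_congr rfl fun k _ => ?_
  have hk : e k ≤ ∑ l, e l := Finset.single_le_sum (fun _ _ => Nat.zero_le _) (Finset.mem_univ k)
  obtain ⟨E, hE⟩ : ∃ E, ∑ l, e l = E + 1 := ⟨_, (Nat.sub_add_cancel ((he k).trans hk)).symm⟩
  simp only [hE, coeff_X_mul]
  have h1 : (X * cofactor θ e k 1).coeff E = θ k - ∑ l, (e l : K) * θ l := by
    rw [show E = (cofactor θ e k 1).natDegree by rw [natDegree_cofactor (he k)]; omega,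
      coeff_X_mul_natDegree, nextCoeff_cofactor_one (he k)]
  rcases (he k).eq_or_lt with hk1 | hk2
  · rw [← hk1, Finset.Icc_self, Finset.sum_singleton, h1, ha2 k hk1.symm, add_zero]
  have h2 : (X * cofactor θ e k 2).coeff E = 1 := by
    rw [show E = (cofactor θ e k 2).natDegree + 1 by rw [natDegree_cofactor hk2]; omega,
      coeff_X_mul, (cofactor_monic k 2).coeff_natDegree]
  have hsub : ({1, 2} : Finset ℕ) ⊆ Finset.Icc 1 (e k) := by
    intro j hj
    simp only [Finset.mem_insert, Finset.mem_singleton] at hj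
    simp only [Finset.mem_Icc]
    omega
  rw [← Finset.sum_subset hsub, Finset.sum_pair (by norm_num : (1 : ℕ) ≠ 2), h1, h2, mul_one]
  intro j hj hj12
  simp only [Finset.mem_insert, Finset.mem_singleton, Finset.mem_Icc] at hj hj12
  rw [coeff_X_mul_eq_zero_of_natDegree_add_one_lt, mul_zero]
  rw [natDegree_cofactor hj.2]
  omega

end PartialFractions

theorem seriesEuler_eq_of_rootMultiplicity_le {N : ℕ} (A : Matrix (Fin N) (Fin N) ℂ)
    (hSEC : (detAsubIz A).rootMultiplicity 0 ≤ (sumAdjAsubIz A).rootMultiplicity 0) :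
    (X * sumAdjIsubAz A).natDegree ≤ (detIsubAz A).natDegree ∧
      seriesEuler A
        = -(X * sumAdjIsubAz A).coeff (detIsubAz A).natDegree / (detIsubAz A).leadingCoeff := by
  have hq : C ((-1) ^ N) * detIsubAz A ≠ 0 := by simp [detIsubAz_ne_zero]
  have hqdeg : (C ((-1) ^ N) * detIsubAz A).natDegree = (detIsubAz A).natDegree :=
    natDegree_C_mul (by simp)
  have hpdeg : (C ((-1) ^ (N + 1)) * (X * sumAdjIsubAz A)).natDegree
      = (X * sumAdjIsubAz A).natDegree :=
    natDegree_C_mul (by simp)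
  have hqN := hqdeg ▸ natDegree_detIsubAz_le A
  rw [detAsubIz_eq_reflect, sumAdjAsubIz_eq_reflect, rootMultiplicity_eq_natTrailingDegree',
    rootMultiplicity_eq_natTrailingDegree'] at hSEC
  have hdeg := natDegree_le_of_natTrailingDegree_reflect_le hq hqN
    (hpdeg ▸ natDegree_X_mul_sumAdjIsubAz_le A) hSEC
  refine ⟨hpdeg ▸ hqdeg ▸ hdeg, ?_⟩
  rw [seriesEuler, detAsubIz_eq_reflect, sumAdjAsubIz_eq_reflect,
    eval_zero_mk_reflect hq hdeg hqN, hqdeg, coeff_C_mul, leadingCoeff_mul, leadingCoeff_C,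
    pow_succ]
  field_simp

end SeriesEuler

open SeriesEuler

theorem stmt16_general {N n : ℕ} (A : Matrix (Fin N) (Fin N) ℤ)
    -- `I` has series Euler characteristic: the rational function is defined at `z = 0`
    (hSEC : (detAsubIz (A.map ((↑) : ℤ → ℂ))).rootMultiplicity 0
      ≤ (sumAdjAsubIz (A.map ((↑) : ℤ → ℂ))).rootMultiplicity 0)
    (θ : Fin n → ℂ) (e : Fin n → ℕ) (he : ∀ k, 1 ≤ e k)
    (d : ℂ) (hd : d ≠ 0)
    (hfact : detIsubAz (A.map ((↑) : ℤ → ℂ)) = C d * ∏ k, (X - C (θ k)) ^ (e k))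
    (Acoef : Fin n → ℕ → ℂ) (hA2 : ∀ k, e k = 1 → Acoef k 2 = 0)
    (hpf : algebraMap ℂ[X] (RatFunc ℂ) (sumAdjIsubAzA (A.map ((↑) : ℤ → ℂ)))
          / algebraMap ℂ[X] (RatFunc ℂ) (detIsubAz (A.map ((↑) : ℤ → ℂ)))
        = RatFunc.C d⁻¹ * ∑ k, ∑ j ∈ Finset.Icc 1 (e k),
            RatFunc.C (Acoef k j) / (RatFunc.X - RatFunc.C (θ k)) ^ j) :
    d⁻¹ * ∑ k, (- θ k * Acoef k 1 - Acoef k 2) = seriesEuler (A.map ((↑) : ℤ → ℂ)) := by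
  set B := A.map ((↑) : ℤ → ℂ)
  obtain ⟨hdeg, hχ⟩ := seriesEuler_eq_of_rootMultiplicity_le B hSEC
  have hS := eq_sum_cofactor_of_div_eq hd (hfact ▸ hpf)
  have hg : (detIsubAz B).natDegree = ∑ k, e k := by
    rw [hfact, natDegree_C_mul hd, natDegree_prod_X_sub_C_pow]
  have hlc : (detIsubAz B).leadingCoeff = d := by
    rw [hfact, leadingCoeff_mul, leadingCoeff_C,
      (monic_prod_of_monic _ _ fun k _ => (monic_X_sub_C (θ k)).pow _).leadingCoeff, mul_one]
  have hu : X * sumAdjIsubAz B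
      = C (N : ℂ) * (X * detIsubAz B) + X * (X * sumAdjIsubAzA B) := by
    rw [sumAdjIsubAz_eq, map_natCast]
    ring
  have htop : (N : ℂ) * d + ∑ k, Acoef k 1 = 0 := by
    have := coeff_eq_zero_of_natDegree_lt (hdeg.trans_lt (Nat.lt_succ_self _))
    rwa [hu, coeff_add, coeff_C_mul, coeff_X_mul, coeff_X_mul, coeff_natDegree, hlc, hg, hS,
      coeff_X_mul_sum_cofactor he] at this
  have hnext : (X * sumAdjIsubAz B).coeff (∑ k, e k)
      = ∑ k, (Acoef k 1 * θ k + Acoef k 2) := by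
    rw [hu, coeff_add, coeff_C_mul, hS, coeff_X_mul_X_mul_sum_cofactor he hA2, hfact,
      mul_left_comm, coeff_C_mul, ← natDegree_prod_X_sub_C_pow θ, coeff_X_mul_natDegree,
      nextCoeff_prod_X_sub_C_pow]
    simp only [mul_sub, Finset.sum_add_distrib, Finset.sum_sub_distrib, ← Finset.sum_mul]
    linear_combination (-∑ l, (e l : ℂ) * θ l) * htop
  rw [hχ, hg, hnext, hlc, neg_div, div_eq_inv_mul, ← mul_neg, ← Finset.sum_neg_distrib]
  exact congrArg _ (Finset.sum_congr rfl fun k _ => by ring)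

/-- For a finite category with `N` objects, adjacency matrix `A` and series Euler
characteristic `χ_Σ`, with `det(I - A·z) = d·∏ (z-θ_k)^{e_k}` of degree `N-r` and partial
fraction coefficients `A_{k,j}`, we have `(1/d)·∑_k (-θ_k·A_{k,1} - A_{k,2}) = χ_Σ`,
where `A_{k,2} = 0` if `e_k = 1`. -/
theorem stmt16 {N n r : ℕ} (A : Matrix (Fin N) (Fin N) ℤ)
    (hpos : ∀ i j, 0 ≤ A i j) (hdiag : ∀ i, 1 ≤ A i i)
    -- `I` has series Euler characteristic: the rational function is defined at `z = 0`
    (hSEC : (detAsubIz (A.map ((↑) : ℤ → ℂ))).rootMultiplicity 0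
      ≤ (sumAdjAsubIz (A.map ((↑) : ℤ → ℂ))).rootMultiplicity 0)
    (θ : Fin n → ℂ) (hθ : Function.Injective θ) (e : Fin n → ℕ) (he : ∀ k, 1 ≤ e k)
    (d : ℂ) (hd : d ≠ 0) (hr : r ≤ N)
    (hdegdet : (detIsubAz (A.map ((↑) : ℤ → ℂ))).natDegree = N - r)
    (hfact : detIsubAz (A.map ((↑) : ℤ → ℂ)) = C d * ∏ k, (X - C (θ k)) ^ (e k))
    (Acoef : Fin n → ℕ → ℂ) (hA2 : ∀ k, e k = 1 → Acoef k 2 = 0)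
    (hpf : algebraMap ℂ[X] (RatFunc ℂ) (sumAdjIsubAzA (A.map ((↑) : ℤ → ℂ)))
          / algebraMap ℂ[X] (RatFunc ℂ) (detIsubAz (A.map ((↑) : ℤ → ℂ)))
        = RatFunc.C d⁻¹ * ∑ k, ∑ j ∈ Finset.Icc 1 (e k),
            RatFunc.C (Acoef k j) / (RatFunc.X - RatFunc.C (θ k)) ^ j) :
    d⁻¹ * ∑ k, (- θ k * Acoef k 1 - Acoef k 2) = seriesEuler (A.map ((↑) : ℤ → ℂ)) :=
  stmt16_general A hSEC θ e he d hd hfact Acoef hA2 hpf
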